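/- The function u(x) = (1/16)·₂F₁(3/2,3/2;3;x)·(1-x) + (1/2)·₂F₁(1/2,1/2;2;x) is strictly increasing on [0,1), with u(0) = 9/16 and limit 2/π as x → 1⁻. -/

import Mathlib

open Real Set Filter

noncomputable def poch (a : ℝ) (n : ℕ) : ℝ := ∏ i ∈ Finset.range n, (a + i)

noncomputable def F (a b c x : ℝ) : ℝ :=
  ∑' n : ℕ, poch a n * poch b n / (poch c n * n.factorial) * x ^ n

noncomputable def u (x : ℝ) : ℝ :=
  (1/16) * F (3/2) (3/2) 3 x * (1 - x) + (1/2) * F (1/2) (1/2) 2 x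

/-!
Comparing coefficients gives `(1 - x) F(3/2,3/2;3;x) + 8 F(1/2,1/2;2;x) = 9 F(1/2,1/2;3;x)`, so
`u = (9/16) F(1/2,1/2;3;·)`, a power series with positive coefficients `c n`: it is strictly
increasing on `[0, 1)` and equals `9/16` at `0`. The partial sums telescope,
`∑_{n<N} c n = 4N(N+2)(4N+5)/9 · c N`, and `c N` is a rational multiple of the reciprocal of the
`N`-th Wallis product, so `∑ c n = 32/(9π)`. Abel's theorem then gives the limit
`(9/16) · 32/(9π) = 2/π`.
-/

lemma poch_zero (a : ℝ) : poch a 0 = 1 := Finset.prod_range_zero _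

lemma poch_succ (a : ℝ) (n : ℕ) : poch a (n + 1) = poch a n * (a + n) :=
  Finset.prod_range_succ _ _

lemma poch_add_one_mul (a : ℝ) (n : ℕ) : a * poch (a + 1) n = poch a n * (a + n) := by
  rw [← poch_succ, poch, poch, Finset.prod_range_succ']
  push_cast
  simp only [add_assoc, add_comm (1 : ℝ), add_zero, mul_comm]

lemma poch_eq_ascPochhammer_eval (a : ℝ) (n : ℕ) : poch a n = (ascPochhammer ℝ n).eval a := by
  induction n with
  | zero => simp [poch_zero]
  | succ n ih => simp [poch_succ, ascPochhammer_succ_right, ih]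

lemma poch_pos {a : ℝ} (ha : 0 < a) (n : ℕ) : 0 < poch a n :=
  Finset.prod_pos fun i _ => by positivity

noncomputable def hgCoeff (a b c : ℝ) (n : ℕ) : ℝ :=
  poch a n * poch b n / (poch c n * n.factorial)

lemma F_eq_tsum (a b c x : ℝ) : F a b c x = ∑' n, hgCoeff a b c n * x ^ n := rfl

lemma hgCoeff_zero (a b c : ℝ) : hgCoeff a b c 0 = 1 := by simp [hgCoeff, poch_zero]

lemma F_zero (a b c : ℝ) : F a b c 0 = 1 := by
  rw [F_eq_tsum, tsum_eq_single 0 fun n hn => by simp [zero_pow hn]]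
  simp [hgCoeff_zero]

lemma hgCoeff_succ (a b c : ℝ) (n : ℕ) :
    hgCoeff a b c (n + 1) = hgCoeff a b c n * ((a + n) * (b + n) / ((c + n) * (n + 1))) := by
  simp only [hgCoeff, poch_succ, Nat.factorial_succ]
  rw [div_mul_div_comm]
  push_cast
  ring

lemma hgCoeff_pos {a b c : ℝ} (ha : 0 < a) (hb : 0 < b) (hc : 0 < c) (n : ℕ) :
    0 < hgCoeff a b c n := by
  have := poch_pos ha n
  have := poch_pos hb n
  have := poch_pos hc n
  unfold hgCoeff
  positivity

lemma hgCoeff_eq_ordinaryHypergeometricCoefficient (a b c : ℝ) (n : ℕ) :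
    hgCoeff a b c n = ordinaryHypergeometricCoefficient a b c n := by
  simp only [hgCoeff, poch_eq_ascPochhammer_eval]
  ring

lemma summable_hgCoeff_mul_pow {a b c x : ℝ} (ha : 0 < a) (hb : 0 < b) (hc : 0 < c)
    (hx : |x| < 1) : Summable fun n => hgCoeff a b c n * x ^ n := by
  have hr := ordinaryHypergeometricSeries_radius_eq_one ℝ a b c fun k => by
    have := k.cast_nonneg (α := ℝ)
    refine ⟨?_, ?_, ?_⟩ <;> linarith
  have hmem : x ∈ Metric.eball (0 : ℝ) (ordinaryHypergeometricSeries ℝ a b c).radius := by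
    simpa [hr, ← ofReal_norm] using hx
  refine ((ordinaryHypergeometricSeries ℝ a b c).summable hmem).congr fun n => ?_
  rw [ordinaryHypergeometricSeries_apply_eq, hgCoeff_eq_ordinaryHypergeometricCoefficient,
    smul_eq_mul]

lemma hasSum_mul_pow_of_shift {d a : ℕ → ℝ} {x s : ℝ} (hd0 : d 0 = 0)
    (hd : ∀ n, d (n + 1) = a n) (ha : HasSum (fun n => a n * x ^ n) s) :
    HasSum (fun n => d n * x ^ n) (x * s) := by
  rw [← hasSum_nat_add_iff' 1]
  simpa [hd0, hd, pow_succ, mul_comm, mul_left_comm] using ha.mul_left x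

lemma strictMonoOn_tsum_mul_pow {f : ℕ → ℝ} {s : Set ℝ} (hf : ∀ n, 0 ≤ f n)
    (hf1 : 0 < f 1) (hs : ∀ x ∈ s, 0 ≤ x)
    (hsum : ∀ x ∈ s, Summable fun n => f n * x ^ n) :
    StrictMonoOn (fun x => ∑' n, f n * x ^ n) s := by
  intro x hx y hy hxy
  refine (hsum x hx).tsum_lt_tsum (i := 1) (fun n => ?_) ?_ (hsum y hy)
  · exact mul_le_mul_of_nonneg_left (pow_le_pow_left₀ (hs x hx) hxy.le n) (hf n)
  · simpa using mul_lt_mul_of_pos_left hxy hf1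

lemma poch_three_halves (n : ℕ) : poch (3/2) n = (2 * n + 1) * poch (1/2) n := by
  have h := poch_add_one_mul (1/2) n
  norm_num at h ⊢
  linear_combination 2 * h

lemma two_mul_poch_three (n : ℕ) : 2 * poch 3 n = (n + 2) * poch 2 n := by
  have h := poch_add_one_mul 2 n
  norm_num at h
  linear_combination h

lemma hgCoeff_three_halves (n : ℕ) :
    hgCoeff (3/2) (3/2) 3 n = (2 * n + 1) ^ 2 * hgCoeff (1/2) (1/2) 3 n := by
  simp only [hgCoeff, poch_three_halves]
  ring

lemma hgCoeff_half_half_two (n : ℕ) :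
    hgCoeff (1/2) (1/2) 2 n = (n + 2) / 2 * hgCoeff (1/2) (1/2) 3 n := by
  have := poch_pos two_pos n
  have := poch_pos three_pos n
  have := n.factorial_pos
  unfold hgCoeff
  field_simp
  linear_combination poch (1/2) n ^ 2 * two_mul_poch_three n

-- The coefficientwise form of `(1 - x) F(3/2,3/2;3;x) + 8 F(1/2,1/2;2;x) = 9 F(1/2,1/2;3;x)`.
lemma hgCoeff_contiguous (n : ℕ) :
    hgCoeff (3/2) (3/2) 3 (n + 1) + 8 * hgCoeff (1/2) (1/2) 2 (n + 1)
      - 9 * hgCoeff (1/2) (1/2) 3 (n + 1) = hgCoeff (3/2) (3/2) 3 n := by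
  rw [hgCoeff_three_halves, hgCoeff_half_half_two, hgCoeff_three_halves, hgCoeff_succ]
  push_cast
  field_simp
  ring

lemma u_eq_F {x : ℝ} (hx : |x| < 1) : u x = 9/16 * F (1/2) (1/2) 3 x := by
  have hA := (summable_hgCoeff_mul_pow (a := 3/2) (b := 3/2) (c := 3)
    (by norm_num) (by norm_num) (by norm_num) hx).hasSum
  have hB := (summable_hgCoeff_mul_pow (a := 1/2) (b := 1/2) (c := 2)
    (by norm_num) (by norm_num) (by norm_num) hx).hasSum
  have hC := (summable_hgCoeff_mul_pow (a := 1/2) (b := 1/2) (c := 3)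
    (by norm_num) (by norm_num) (by norm_num) hx).hasSum
  have hshift := hasSum_mul_pow_of_shift
    (d := fun n => hgCoeff (3/2) (3/2) 3 n + 8 * hgCoeff (1/2) (1/2) 2 n
      - 9 * hgCoeff (1/2) (1/2) 3 n)
    (by simp only [hgCoeff_zero]; norm_num) hgCoeff_contiguous hA
  have hlin := (hA.add (hB.mul_left 8)).sub (hC.mul_left 9)
  have key := hshift.unique (by simpa only [add_mul, sub_mul, mul_assoc] using hlin)
  rw [u, F_eq_tsum, F_eq_tsum, F_eq_tsum]
  linear_combination -key / 16

lemma hgCoeff_half_half_three_pos (n : ℕ) : 0 < hgCoeff (1/2) (1/2) 3 n :=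
  hgCoeff_pos (by norm_num) (by norm_num) (by norm_num) n

lemma hgCoeff_half_half_three_mul_wallis (N : ℕ) :
    hgCoeff (1/2) (1/2) 3 N * ((N + 1) * (N + 2) * (2 * N + 1)) * Real.Wallis.W N = 2 := by
  induction N with
  | zero => simp [hgCoeff_zero, Real.Wallis.W]
  | succ N ih =>
    rw [hgCoeff_succ, Real.Wallis.W_succ]
    conv_rhs => rw [← ih]
    push_cast
    field_simp
    ring

lemma sum_range_hgCoeff_half_half_three (N : ℕ) :
    ∑ n ∈ Finset.range N, hgCoeff (1/2) (1/2) 3 n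
      = 4 * N * (N + 2) * (4 * N + 5) / 9 * hgCoeff (1/2) (1/2) 3 N := by
  induction N with
  | zero => simp
  | succ N ih =>
    rw [Finset.sum_range_succ, ih, hgCoeff_succ]
    push_cast
    field_simp
    ring

lemma hasSum_hgCoeff_half_half_three : HasSum (hgCoeff (1/2) (1/2) 3) (32 / (9 * π)) := by
  rw [hasSum_iff_tendsto_nat_of_nonneg fun n => (hgCoeff_half_half_three_pos n).le]
  have hS (N : ℕ) : ∑ n ∈ Finset.range N, hgCoeff (1/2) (1/2) 3 n
      = 8/9 * ((0 + 1 * N) / (1 + 1 * N)) * ((5 + 4 * N) / (1 + 2 * N)) / Real.Wallis.W N := by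
    have hW := hgCoeff_half_half_three_mul_wallis N
    rw [sum_range_hgCoeff_half_half_three, eq_div_iff (Real.Wallis.W_pos N).ne']
    field_simp
    linear_combination 4 * (N : ℝ) * (4 * N + 5) * hW
  have hlim := (((tendsto_add_mul_div_add_mul_atTop_nhds (0 : ℝ) 1 1 one_ne_zero).const_mul
    (8/9)).mul (tendsto_add_mul_div_add_mul_atTop_nhds (5 : ℝ) 1 4 two_ne_zero)).div
    Real.Wallis.tendsto_W_nhds_pi_div_two (by positivity)
  rw [show 32 / (9 * π) = 8/9 * (1 / 1) * (4 / 2) / (π / 2) by field_simp; ring]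
  exact hlim.congr fun N => (hS N).symm

theorem stmt9 :
    StrictMonoOn u (Ico 0 1) ∧ u 0 = 9/16 ∧
    Tendsto u (nhdsWithin 1 (Ico 0 1)) (nhds (2 / π)) := by
  have habs : ∀ x ∈ Ico (0 : ℝ) 1, |x| < 1 := fun x hx =>
    abs_lt.2 ⟨by linarith [hx.1], hx.2⟩
  have hmono : StrictMonoOn (F (1/2) (1/2) 3) (Ico 0 1) :=
    strictMonoOn_tsum_mul_pow (fun n => (hgCoeff_half_half_three_pos n).le)
      (hgCoeff_half_half_three_pos 1) (fun x hx => hx.1)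
      fun x hx => summable_hgCoeff_mul_pow (by norm_num) (by norm_num) (by norm_num) (habs x hx)
  have habel : Tendsto (F (1/2) (1/2) 3) (nhdsWithin 1 (Ico 0 1)) (nhds (32 / (9 * π))) :=
    (Real.tendsto_tsum_powerSeries_nhdsWithin_lt hasSum_hgCoeff_half_half_three.tendsto_sum_nat
      ).mono_left (nhdsWithin_mono _ Ico_subset_Iio_self)
  refine ⟨fun x hx y hy hxy => ?_, by norm_num [u, F_zero], ?_⟩
  · rw [u_eq_F (habs x hx), u_eq_F (habs y hy)]
    exact mul_lt_mul_of_pos_left (hmono hx hy hxy) (by norm_num)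
  · rw [show 2 / π = 9/16 * (32 / (9 * π)) by field_simp; ring]
    refine (habel.const_mul _).congr' ?_
    filter_upwards [self_mem_nhdsWithin] with x hx using (u_eq_F (habs x hx)).symm
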